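/- arXiv:2307.01170 — 2 statements merged into one kernel-verified Lean document; each statement's English description precedes it below -/
import Mathlib

section
/- Let U_1, …, U_N be mutually-labeling sets for a concept c and let V = U_1 ∪ ⋯ ∪ U_N. Then for every sequence (x_s)_{s≥1} in X, the number of times t ≥ 2 at which x_t ∈ V and the 1-nearest neighbor rule makes a mistake at time t (under worst-case tie-breaking) is at most N. -/
open scoped ENNReal

/-- The margin of a point `x`: the infimum distance (in `[0,∞]`) to points of a
different class under the concept `c`; `∞` if no such point exists. -/
noncomputable def margin {X Y : Type*} [MetricSpace X] (c : X → Y) (x : X) : ℝ≥0∞ :=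
  ⨅ (x' : X) (_ : c x' ≠ c x), edist x x'

/-- A set `U` is mutually labeling for `c` if `ρ(x,x') < m_c(x)` for all `x, x' ∈ U`. -/
def MutuallyLabeling {X Y : Type*} [MetricSpace X] (c : X → Y) (U : Set X) : Prop :=
  ∀ x ∈ U, ∀ x' ∈ U, edist x x' < margin c x

/-- The 1-nearest neighbor rule makes a mistake at time `t ≥ 2` on the sequence
`(x s)_{s ≥ 1}` labeled by `c`, under worst-case tie-breaking, if some nearest
neighbor `x s` (`1 ≤ s < t`) of `x t` has the wrong label. -/
def NNMistake {X Y : Type*} [MetricSpace X] (c : X → Y) (x : ℕ → X) (t : ℕ) : Prop :=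
  ∃ s, 1 ≤ s ∧ s < t ∧ (∀ s', 1 ≤ s' → s' < t → edist (x t) (x s) ≤ edist (x t) (x s'))
    ∧ c (x s) ≠ c (x t)

/-! A mistake at time `t` is witnessed by a nearest earlier neighbour `x r` with a different
label, so `margin c (x t) ≤ edist (x t) (x r)`. If some earlier `x s` lies in the same
mutually-labeling set as `x t`, then `edist (x t) (x r) ≤ edist (x t) (x s) < margin c (x t)`, a
contradiction. So each `U i` sees a mistake at most once (at the first visit of the sequence),
and a union of `N` such sets sees at most `N`. -/

section NearestNeighbor

variable {X Y : Type*} [MetricSpace X] {c : X → Y}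

lemma margin_le_edist {x x' : X} (h : c x' ≠ c x) : margin c x ≤ edist x x' :=
  iInf₂_le x' h

lemma NNMistake.one_le {x : ℕ → X} {t : ℕ} (h : NNMistake c x t) : 1 ≤ t := by
  obtain ⟨s, hs, hst, -⟩ := h
  omega

lemma MutuallyLabeling.not_nnMistake {U : Set X} (hU : MutuallyLabeling c U) {x : ℕ → X}
    {s t : ℕ} (hs : 1 ≤ s) (hst : s < t) (hxs : x s ∈ U) (hxt : x t ∈ U) :
    ¬ NNMistake c x t := by
  rintro ⟨r, -, -, hnearest, hlabel⟩
  exact lt_irrefl _ <|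
    calc edist (x t) (x r) ≤ edist (x t) (x s) := hnearest s hs hst
      _ < margin c (x t) := hU _ hxt _ hxs
      _ ≤ edist (x t) (x r) := margin_le_edist hlabel

lemma MutuallyLabeling.subsingleton_nnMistake {U : Set X} (hU : MutuallyLabeling c U)
    (x : ℕ → X) : {t | x t ∈ U ∧ NNMistake c x t}.Subsingleton := by
  rintro a ⟨hxa, ha⟩ b ⟨hxb, hb⟩
  by_contra hne
  rcases lt_or_gt_of_ne hne with hab | hba
  · exact hU.not_nnMistake ha.one_le hab hxa hxb hb
  · exact hU.not_nnMistake hb.one_le hba hxb hxa ha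

end NearestNeighbor

/-- If `V` is the union of `N` mutually-labeling sets `U 0, …, U (N-1)` for `c`, then on
any sequence the 1-nearest neighbor rule makes at most `N` mistakes at times `t ≥ 2`
with `x t ∈ V`, even under worst-case tie-breaking. -/
theorem mistakes_le_of_union_mutuallyLabeling {X Y : Type*} [MetricSpace X] (c : X → Y)
    (N : ℕ) (U : Fin N → Set X) (hU : ∀ i, MutuallyLabeling c (U i)) :
    ∀ x : ℕ → X,
      {t : ℕ | 2 ≤ t ∧ x t ∈ (⋃ i, U i) ∧ NNMistake c x t}.encard ≤ N := by
  intro x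
  have hsub : {t : ℕ | 2 ≤ t ∧ x t ∈ (⋃ i, U i) ∧ NNMistake c x t} ⊆
      ⋃ i, {t | x t ∈ U i ∧ NNMistake c x t} := by
    rintro t ⟨-, hxt, hmistake⟩
    obtain ⟨i, hi⟩ := Set.mem_iUnion.1 hxt
    exact Set.mem_iUnion.2 ⟨i, hi, hmistake⟩
  calc _ ≤ (⋃ i, {t | x t ∈ U i ∧ NNMistake c x t}).encard := Set.encard_le_encard hsub
    _ ≤ ∑ i, {t | x t ∈ U i ∧ NNMistake c x t}.encard := Set.encard_iUnion_le_of_fintype _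
    _ ≤ ∑ _i : Fin N, 1 := Finset.sum_le_sum fun i _ =>
      Set.encard_le_one_iff_subsingleton.2 ((hU i).subsingleton_nnMistake x)
    _ = N := by simp
end

section
/- Let (X, ρ) be a separable metric space and c : X → Y a concept. Then there exists a countable family of open balls, each of which is a mutually-labeling set for c, whose union contains the set of all non-boundary points { x ∈ X : m_c(x) > 0 }. -/
open scoped ENNReal

/-! The margin is `1`-Lipschitz, so a ball of radius `r` around a point `d` that is `r`-close to
some `x` with `m_c(x) ≥ 4r` is mutually labeling: its points are less than `2r` from each other
and from `x`, hence have margin greater than `4r - 2r`. Covering the non-boundary points therefore only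
needs balls centred in a countable dense set with radii `1/n`. -/

open Set Metric

section

variable {X Y : Type*} [MetricSpace X]

lemma margin_eq_infEDist (c : X → Y) (x : X) : margin c x = infEDist x {x' | c x' ≠ c x} :=
  rfl

lemma margin_le_margin_add_edist (c : X → Y) (x u : X) :
    margin c x ≤ margin c u + edist x u := by
  by_cases h : c u = c x
  · rw [margin_eq_infEDist, margin_eq_infEDist, h]
    exact infEDist_le_infEDist_add_edist
  · exact (infEDist_le_edist_of_mem h).trans le_add_self

lemma edist_lt_two_mul_of_mem_eball {d u v : X} {r : ℝ≥0∞} (hu : u ∈ eball d r)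
    (hv : v ∈ eball d r) : edist u v < 2 * r :=
  calc edist u v ≤ edist u d + edist v d := edist_triangle_right _ _ _
    _ < r + r := ENNReal.add_lt_add hu hv
    _ = 2 * r := (two_mul r).symm

lemma mutuallyLabeling_eball {c : X → Y} {x d : X} {r : ℝ≥0∞} (hxd : x ∈ eball d r)
    (hr : 4 * r ≤ margin c x) : MutuallyLabeling c (eball d r) := by
  intro u hu v hv
  by_contra! huv
  have : margin c x < 4 * r :=
    calc margin c x ≤ margin c u + edist x u := margin_le_margin_add_edist c x u
      _ ≤ edist u v + edist x u := by gcongr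
      _ < 2 * r + 2 * r := ENNReal.add_lt_add (edist_lt_two_mul_of_mem_eball hu hv)
          (edist_lt_two_mul_of_mem_eball hxd hu)
      _ = 4 * r := by ring
  exact this.not_ge hr

end

/-- In a separable metric space there is a countable family of open balls, each
mutually labeling for `c`, whose union contains all non-boundary points
`{x | m_c(x) > 0}`. -/
theorem countable_mutuallyLabeling_cover {X Y : Type*} [MetricSpace X]
    [TopologicalSpace.SeparableSpace X] (c : X → Y) :
    ∃ S : Set (X × ℝ≥0∞), S.Countable ∧
      (∀ p ∈ S, MutuallyLabeling c (EMetric.ball p.1 p.2)) ∧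
      {x : X | 0 < margin c x} ⊆ ⋃ p ∈ S, EMetric.ball p.1 p.2 := by
  obtain ⟨D, hDc, hDd⟩ := TopologicalSpace.exists_countable_dense X
  refine ⟨{p ∈ D ×ˢ range (fun n : ℕ ↦ (n : ℝ≥0∞)⁻¹) | MutuallyLabeling c (eball p.1 p.2)},
    (hDc.prod (countable_range _)).mono (sep_subset _ _), fun p hp ↦ hp.2, fun x hx ↦ ?_⟩
  obtain ⟨n, hn⟩ := ENNReal.exists_inv_nat_lt (a := margin c x / 4)
    (ENNReal.div_pos hx.ne' ENNReal.ofNat_ne_top).ne'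
  obtain ⟨d, hdD, hxd⟩ := EMetric.mem_closure_iff.1 (hDd x) _
    (ENNReal.inv_pos.2 (ENNReal.natCast_ne_top n))
  have hn4 : 4 * (n : ℝ≥0∞)⁻¹ ≤ margin c x := by
    rw [mul_comm]
    exact (ENNReal.lt_div_iff_mul_lt (by norm_num) (by norm_num)).1 hn |>.le
  exact mem_biUnion (x := (d, (n : ℝ≥0∞)⁻¹)) ⟨⟨hdD, n, rfl⟩, mutuallyLabeling_eball hxd hn4⟩ hxd
end
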